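/- arXiv:1812.10525 — 2 statements merged into one kernel-verified Lean document; each statement's English description precedes it below -/
import Mathlib

section
/- In the K-receiver combination network with messages M_{\overline{K}} (for receivers 1,...,K−1) and M_{\overline{K−1}} (for receivers 1,...,K−2,K), any achievable rate pair satisfies R_{\overline{K}} + R_{\overline{K−1}} ≤ C_{↓_{W_{K−1}}{\overline{K}}} + C_{W_K}, where ↓_{W_{K−1}}{\overline{K}} = {S ∈ W_{K−1} : K ∉ S}. The key information-theoretic step is: for any joint distribution with independent messages and channel outputs Y_i^n = V_{W_i}^n where each component V_S takes values in a set of size 2^{C_S}, n R_{\overline{K}} ≤ H(Y_{K}^n, Y_{K−1}^n) − n R_{\overline{K−1}} + 2nε_n ≤ n C_{W_K} + n C_{↓_{W_{K−1}}{\overline{K}}} − n R_{\overline{K−1}} + 2nε_n. -/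
open Finset

/-- Achievability of a rate pair over the `K`-receiver combination network with
two order-`(K-1)` messages.  The channel input has, for each nonempty
`S ⊆ [1:K]`, a component in `V S` seen noiselessly by exactly the receivers in `S`.
Message 1 (rate `R1`, the message `M_{\bar K}`) must be decoded by receivers
`0,…,K-2` (0-indexed), and message 2 (rate `R2`, the message `M_{\bar{K-1}}`)
by all receivers except receiver `K-2` (0-indexed), i.e. by `0,…,K-3` and `K-1`.
Achievability: for every `ε > 0` there is a block code of some length `n` with
per-symbol rates at least `R1 - ε`, `R2 - ε` and average (uniform-message)
error probability at most `ε`. -/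
def TwoOrderAchievable (K : ℕ) (V : {S : Finset (Fin K) // S.Nonempty} → Type)
    [∀ S, Fintype (V S)] (R1 R2 : ℝ) : Prop :=
  ∀ ε : ℝ, 0 < ε → ∃ (n M1 M2 : ℕ), 0 < n ∧ 0 < M1 ∧ 0 < M2 ∧
    R1 - ε ≤ Real.logb 2 M1 / n ∧ R2 - ε ≤ Real.logb 2 M2 / n ∧
    ∃ (enc : Fin M1 → Fin M2 → Fin n → ∀ S : {S : Finset (Fin K) // S.Nonempty}, V S)
      (dec : ∀ i : Fin K,
        (Fin n → ∀ T : {S : {S : Finset (Fin K) // S.Nonempty} // i ∈ S.1}, V T.1) →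
          Fin M1 × Fin M2),
      ((univ.filter (fun mm : Fin M1 × Fin M2 =>
          ¬ ((∀ i : Fin K, (i : ℕ) < K - 1 →
                (dec i (fun t T => enc mm.1 mm.2 t T.1)).1 = mm.1) ∧
             (∀ i : Fin K, (i : ℕ) ≠ K - 2 →
                (dec i (fun t T => enc mm.1 mm.2 t T.1)).2 = mm.2)))).card : ℝ) ≤
        ε * (M1 * M2)

open Filter Topology

/-! Receivers `K-1` and `K` (0-indexed `K-2`, `K-1`) together decode both messages of every
message pair outside an `ε`-fraction, so these pairs are determined by the `n`-letter outputs
of the components `V S` with `S` containing `K-1` or `K`. Counting gives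
`(1 - ε) M₁ M₂ ≤ ∏_S |V S| ^ n`, which replaces Fano's inequality in the paper's entropy
bound; taking `log₂`, dividing by `n` and letting `ε → 0` yields the rate bound, since the
components seen by `K-1` or `K` are exactly `↓_{W_{K-1}} \bar K ∪ W_K`. -/

theorem Fintype.card_pi_subtype {ι : Type*} [Fintype ι] [DecidableEq ι] (p : ι → Prop)
    [DecidablePred p] (V : ι → Type*) [∀ i, Fintype (V i)] :
    Fintype.card (∀ T : {i // p i}, V T) = ∏ i ∈ univ.filter p, Fintype.card (V i) := by
  rw [Fintype.card_pi, Finset.prod_subtype (univ.filter p) (p := p) (by simp)]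

theorem Finset.sum_filter_or_eq_sum_filter_and_not_add {ι M : Type*} [AddCommMonoid M]
    (s : Finset ι) (p q : ι → Prop) [DecidablePred p] [DecidablePred q] (f : ι → M) :
    ∑ i ∈ s.filter (fun i => p i ∨ q i), f i =
      ∑ i ∈ s.filter (fun i => p i ∧ ¬ q i), f i + ∑ i ∈ s.filter q, f i := by
  rw [← Finset.sum_filter_not_add_sum_filter (s.filter (fun i => p i ∨ q i)) q,
    Finset.filter_filter, Finset.filter_filter]
  congr 2 <;> ext i <;> simp only [Finset.mem_filter] <;> tauto

theorem one_sub_mul_card_le_card_of_injOn {α β : Type*} [Fintype α] [Fintype β]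
    {p : α → Prop} [DecidablePred p] {ε : ℝ}
    (hbad : ((univ.filter fun a => ¬ p a).card : ℝ) ≤ ε * Fintype.card α)
    {f : α → β} (hf : Set.InjOn f {a | p a}) :
    (1 - ε) * Fintype.card α ≤ Fintype.card β := by
  have hgood : (univ.filter p).card ≤ Fintype.card β := by
    rw [← Finset.card_univ]
    exact Finset.card_le_card_of_injOn f (fun a _ => Finset.mem_univ _) (by simpa using hf)
  have hsplit := Finset.card_filter_add_card_filter_not (s := univ) p
  rw [Finset.card_univ] at hsplit
  have : ((univ.filter p).card : ℝ) + (univ.filter fun a => ¬ p a).card = Fintype.card α := by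
    exact_mod_cast hsplit
  have : ((univ.filter p).card : ℝ) ≤ Fintype.card β := by exact_mod_cast hgood
  linarith

theorem logb_div_add_logb_div_le {n : ℕ} (hn : 0 < n) {M1 M2 P ε : ℝ} (hM1 : 0 < M1)
    (hM2 : 0 < M2) (hε0 : 0 ≤ ε) (hε1 : ε < 1) (h : (1 - ε) * (M1 * M2) ≤ P ^ n) :
    Real.logb 2 M1 / n + Real.logb 2 M2 / n ≤ Real.logb 2 P - Real.logb 2 (1 - ε) := by
  have hn' : (0 : ℝ) < n := by exact_mod_cast hn
  have hlog := Real.logb_le_logb_of_le (b := 2) (by norm_num) (by positivity) h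
  rw [Real.logb_mul (by linarith) (by positivity), Real.logb_mul hM1.ne' hM2.ne',
    Real.logb_pow] at hlog
  have hloss : 0 ≤ -Real.logb 2 (1 - ε) :=
    neg_nonneg.2 (Real.logb_nonpos (by norm_num) (by linarith) (by linarith))
  calc Real.logb 2 M1 / n + Real.logb 2 M2 / n
      ≤ Real.logb 2 P + -Real.logb 2 (1 - ε) / n := by
        rw [← add_div, div_le_iff₀ hn', add_mul, div_mul_cancel₀ _ hn'.ne']
        linarith
    _ ≤ Real.logb 2 P - Real.logb 2 (1 - ε) := by
        linarith [div_le_self hloss (by exact_mod_cast hn : (1 : ℝ) ≤ n)]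

theorem injOn_observations_of_decoded {K n M1 M2 : ℕ}
    {V : {S : Finset (Fin K) // S.Nonempty} → Type*}
    (enc : Fin M1 → Fin M2 → Fin n → ∀ S, V S)
    (dec : ∀ i : Fin K,
      (Fin n → ∀ T : {S : {S : Finset (Fin K) // S.Nonempty} // i ∈ S.1}, V T.1) →
        Fin M1 × Fin M2)
    (i j : Fin K) :
    Set.InjOn (fun mm : Fin M1 × Fin M2 =>
        fun t (T : {S : {S : Finset (Fin K) // S.Nonempty} // i ∈ S.1 ∨ j ∈ S.1}) =>
          enc mm.1 mm.2 t T.1)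
      {mm | (dec i (fun t T => enc mm.1 mm.2 t T.1)).1 = mm.1 ∧
        (dec j (fun t T => enc mm.1 mm.2 t T.1)).2 = mm.2} := by
  rintro ⟨m1, m2⟩ ⟨hi, hj⟩ ⟨m1', m2'⟩ ⟨hi', hj'⟩ hobs
  have hdec_i := congrArg (fun y => (dec i fun t T => y t ⟨T.1, Or.inl T.2⟩).1) hobs
  have hdec_j := congrArg (fun y => (dec j fun t T => y t ⟨T.1, Or.inr T.2⟩).2) hobs
  exact Prod.ext (hi.symm.trans (hdec_i.trans hi')) (hj.symm.trans (hdec_j.trans hj'))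

theorem TwoOrderAchievable.add_le {K : ℕ} {V : {S : Finset (Fin K) // S.Nonempty} → Type}
    [∀ S, Fintype (V S)] {R1 R2 : ℝ} (hach : TwoOrderAchievable K V R1 R2)
    (i j : Fin K) (hi : (i : ℕ) < K - 1) (hj : (j : ℕ) ≠ K - 2) {ε : ℝ} (hε0 : 0 < ε)
    (hε1 : ε < 1) :
    R1 + R2 ≤
      ∑ S ∈ univ.filter (fun S : {S : Finset (Fin K) // S.Nonempty} => i ∈ S.1 ∨ j ∈ S.1),
        Real.logb 2 (Fintype.card (V S)) + 2 * ε - Real.logb 2 (1 - ε) := by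
  obtain ⟨n, M1, M2, hn, hM1, hM2, hR1, hR2, enc, dec, herr⟩ := hach ε hε0
  have : ∀ S, Nonempty (V S) := fun S => ⟨enc ⟨0, hM1⟩ ⟨0, hM2⟩ ⟨0, hn⟩ S⟩
  rw [show ((M1 : ℝ) * M2) = Fintype.card (Fin M1 × Fin M2) by simp] at herr
  have hcount := one_sub_mul_card_le_card_of_injOn herr <|
    (injOn_observations_of_decoded enc dec i j).mono fun _ h => And.intro (h.1 i hi) (h.2 j hj)
  rw [Fintype.card_fun, Fintype.card_pi_subtype, Fintype.card_fin, Fintype.card_prod,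
    Fintype.card_fin, Fintype.card_fin] at hcount
  push_cast at hcount
  have hrate := logb_div_add_logb_div_le hn (by exact_mod_cast hM1) (by exact_mod_cast hM2)
    hε0.le hε1 hcount
  rw [Real.logb_prod _ _ (fun S _ => by positivity)] at hrate
  linarith

/-- Converse bound for the combination network with messages
`M_{\bar K}` and `M_{\bar{K-1}}`: every achievable rate pair satisfies
`R1 + R2 ≤ C_{↓_{W_{K-1}}{\bar K}} + C_{W_K}`, where `C_S = log₂ |V S|`,
`↓_{W_{K-1}}{\bar K}` is the family of sets containing receiver `K-1` but not
receiver `K`, and `W_K` the family of sets containing receiver `K`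
(receivers `K-1`, `K` are the 0-indexed `⟨K-2,_⟩`, `⟨K-1,_⟩`). -/
theorem stmt_11 (K : ℕ) (hK : 2 ≤ K)
    (V : {S : Finset (Fin K) // S.Nonempty} → Type)
    [∀ S, Fintype (V S)]
    (R1 R2 : ℝ) (hach : TwoOrderAchievable K V R1 R2) :
    R1 + R2 ≤
      (∑ S ∈ univ.filter (fun S : {S : Finset (Fin K) // S.Nonempty} =>
          (⟨K - 2, by omega⟩ : Fin K) ∈ S.1 ∧ (⟨K - 1, by omega⟩ : Fin K) ∉ S.1),
        Real.logb 2 (Fintype.card (V S))) +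
      ∑ S ∈ univ.filter (fun S : {S : Finset (Fin K) // S.Nonempty} =>
          (⟨K - 1, by omega⟩ : Fin K) ∈ S.1),
        Real.logb 2 (Fintype.card (V S)) := by
  rw [← Finset.sum_filter_or_eq_sum_filter_and_not_add]
  have hloss : Tendsto (fun ε : ℝ => 2 * ε - Real.logb 2 (1 - ε)) (𝓝[>] 0) (𝓝 0) := by
    have : ContinuousAt (fun ε : ℝ => 2 * ε - Real.logb 2 (1 - ε)) 0 := by
      fun_prop (disch := norm_num)
    simpa using this.tendsto.mono_left nhdsWithin_le_nhds
  refine ge_of_tendsto (by simpa using tendsto_const_nhds.add hloss) ?_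
  filter_upwards [Ioo_mem_nhdsGT one_pos] with ε hε
  rw [← add_sub_assoc]
  exact hach.add_le ⟨K - 2, by omega⟩ ⟨K - 1, by omega⟩ (by simp; omega) (by simp; omega)
    hε.1 hε.2
end

section
/- In the K-receiver combination network with messages M_{\overline{K}} and M_{\overline{K−1}}, any achievable rate pair satisfies, for every j ∈ {1,...,K−2}: 2R_{\overline{K−1}} + 2R_{\overline{K}} ≤ C_{↓_{W_j}{\overline{K−1},\overline{K}}} + C_{W_K} + C_{W_{K−1}}, where ↓_{W_j}{\overline{K−1},\overline{K}} = {S ∈ W_j : K ∉ S or K−1 ∉ S}. A key combinatorial fact used is W_K ∩ W_{K−1} ∩ W_j = ↑_{W_j}{K−1,K} = {S ∈ W_j : {K−1,K} ⊆ S} and C_{W_j} = C_{↓_{W_j}{\overline{K−1},\overline{K}}} + C_{↑_{W_j}{K−1.K}}. -/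
/-!
A message pair is *correct* if every receiver decodes what it should; by achievability at least
a `1 - ε` fraction of the pairs is correct. If receiver `a` decodes `M_{\bar K}` and receiver `b`
decodes `M_{\bar{K-1}}`, a correct pair is determined by the joint observation of `W_a ∪ W_b`, so
counting codewords gives the cut-set bound `R₁ + R₂ ≤ C_{W_a ∪ W_b}`. Apply it to `a = b = j` and
to the pair `K-1, K`, and add: by inclusion–exclusion
`C_{W_j} + C_{W_{K-1} ∪ W_K} = C_↓ + C_↑ + C_{W_{K-1}} + C_{W_K} - C_{W_{K-1} ∩ W_K}`,
and `↑_{W_j}{K-1.K} ⊆ W_{K-1} ∩ W_K`.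
-/

open Finset

open Filter Topology

section Counting

variable {ι : Type*} [Fintype ι] [DecidableEq ι] {V : ι → Type*} [∀ i, Fintype (V i)]

theorem logb_card_restrict_eq [∀ i, Nonempty (V i)] (p : ι → Prop) [DecidablePred p] (n : ℕ) :
    Real.logb 2 (Fintype.card (Fin n → ∀ i : {i // p i}, V i)) =
      n * ∑ i ∈ univ.filter p, Real.logb 2 (Fintype.card (V i)) := by
  rw [Fintype.card_fun, Fintype.card_pi, Fintype.card_fin, Nat.cast_pow, Real.logb_pow,
    Nat.cast_prod, Real.logb_prod _ _ (fun i _ => Nat.cast_ne_zero.2 Fintype.card_ne_zero),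
    sum_subtype (univ.filter p) (p := p) (fun i => by simp)]

theorem logb_card_le_of_decode [∀ i, Nonempty (V i)] {α : Type*} (p : ι → Prop) [DecidablePred p]
    {n : ℕ} (G : Finset α) (c : α → Fin n → ∀ i, V i)
    (d : (Fin n → ∀ i : {i // p i}, V i) → α) (hd : ∀ a ∈ G, d (fun t i => c a t i) = a) :
    Real.logb 2 #G ≤ n * ∑ i ∈ univ.filter p, Real.logb 2 (Fintype.card (V i)) := by
  rw [← logb_card_restrict_eq]
  rcases G.eq_empty_or_nonempty with rfl | hG
  · rw [card_empty, Nat.cast_zero, Real.logb_zero]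
    exact Real.logb_nonneg one_lt_two (by exact_mod_cast Fintype.card_pos)
  have hinj : Set.InjOn (fun a t (i : {i // p i}) => c a t i) G := fun a ha b hb hab => by
    rw [← hd a ha, ← hd b hb]
    exact congrArg d hab
  refine Real.logb_le_logb_of_le one_lt_two (by exact_mod_cast hG.card_pos) ?_
  exact_mod_cast card_le_card_of_injOn _ (fun _ _ => mem_coe.2 (mem_univ _)) hinj

end Counting

theorem add_le_add_sub_logb_of_code {R1 R2 C ε g : ℝ} {n M1 M2 : ℕ} (hn : 0 < n) (hM1 : 0 < M1)
    (hM2 : 0 < M2) (hε : 0 ≤ ε) (hε1 : ε < 1) (hR1 : R1 - ε ≤ Real.logb 2 M1 / n)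
    (hR2 : R2 - ε ≤ Real.logb 2 M2 / n) (hg : (1 - ε) * (M1 * M2) ≤ g)
    (hgC : Real.logb 2 g ≤ n * C) :
    R1 + R2 ≤ C + 2 * ε - Real.logb 2 (1 - ε) := by
  have hn' : (1 : ℝ) ≤ n := by exact_mod_cast hn
  have hM1' : (0 : ℝ) < M1 := by exact_mod_cast hM1
  have hM2' : (0 : ℝ) < M2 := by exact_mod_cast hM2
  have hlog : Real.logb 2 (1 - ε) + Real.logb 2 M1 + Real.logb 2 M2 ≤ n * C := by
    rw [← Real.logb_mul (by linarith) hM1'.ne', ← Real.logb_mul (by positivity) hM2'.ne',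
      mul_assoc]
    exact (Real.logb_le_logb_of_le one_lt_two (by positivity) hg).trans hgC
  have hloss : Real.logb 2 (1 - ε) ≤ Real.logb 2 (1 - ε) / n := by
    have := Real.logb_nonpos one_lt_two (by linarith : 0 ≤ 1 - ε) (by linarith)
    rw [le_div_iff₀ (by positivity)]
    nlinarith
  have hrate : Real.logb 2 (1 - ε) / n + Real.logb 2 M1 / n + Real.logb 2 M2 / n ≤ C := by
    rw [← add_div, ← add_div, div_le_iff₀ (by positivity), mul_comm]
    exact hlog
  linarith

theorem le_of_forall_le_add_sub_logb {a b : ℝ}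
    (h : ∀ ε, 0 < ε → ε < 1 → a ≤ b + 2 * ε - Real.logb 2 (1 - ε)) : a ≤ b := by
  have hcont : ContinuousAt (fun ε : ℝ => b + 2 * ε - Real.logb 2 (1 - ε)) 0 :=
    (continuousAt_const.add (continuousAt_id.const_mul 2)).sub
      ((continuousAt_const.sub continuousAt_id).logb (by norm_num))
  have hlim : Tendsto (fun ε : ℝ => b + 2 * ε - Real.logb 2 (1 - ε)) (𝓝[>] 0) (𝓝 b) := by
    simpa using hcont.tendsto.mono_left nhdsWithin_le_nhds
  refine ge_of_tendsto hlim ?_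
  filter_upwards [Ioo_mem_nhdsGT zero_lt_one] with ε hε using h ε hε.1 hε.2

section SumSplit

variable {ι : Type*} [Fintype ι] (q a b : ι → Prop) [DecidablePred q] [DecidablePred a]
  [DecidablePred b]

theorem sum_filter_and_not_or_add_sum_filter_and_and {M : Type*} [AddCommMonoid M] (f : ι → M) :
    ∑ i ∈ univ.filter (fun i => q i ∧ (¬ a i ∨ ¬ b i)), f i +
      ∑ i ∈ univ.filter (fun i => q i ∧ a i ∧ b i), f i = ∑ i ∈ univ.filter q, f i := by
  rw [add_comm, ← sum_filter_add_sum_filter_not (univ.filter q) (fun i => a i ∧ b i),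
    filter_filter, filter_filter]
  congr 2
  ext i
  simp only [mem_filter, mem_univ, true_and, not_and_or]

theorem sum_filter_add_sum_filter_or_le {f : ι → ℝ} (hf : ∀ i, 0 ≤ f i) :
    ∑ i ∈ univ.filter q, f i + ∑ i ∈ univ.filter (fun i => a i ∨ b i), f i ≤
      ∑ i ∈ univ.filter (fun i => q i ∧ (¬ a i ∨ ¬ b i)), f i +
        ∑ i ∈ univ.filter b, f i + ∑ i ∈ univ.filter a, f i := by
  classical
  have hunion : ∑ i ∈ univ.filter (fun i => a i ∨ b i), f i +
      ∑ i ∈ univ.filter a ∩ univ.filter b, f i =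
        ∑ i ∈ univ.filter a, f i + ∑ i ∈ univ.filter b, f i := by
    rw [filter_or]
    exact sum_union_inter
  have hup : ∑ i ∈ univ.filter (fun i => q i ∧ a i ∧ b i), f i ≤
      ∑ i ∈ univ.filter a ∩ univ.filter b, f i :=
    sum_le_sum_of_subset_of_nonneg (fun i => by simp +contextual) (fun i _ _ => hf i)
  linarith [sum_filter_and_not_or_add_sum_filter_and_and q a b f]

end SumSplit

theorem TwoOrderAchievable.add_le_sum_logb_card {K : ℕ}
    {V : {S : Finset (Fin K) // S.Nonempty} → Type} [∀ S, Fintype (V S)] [∀ S, Nonempty (V S)]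
    {R1 R2 : ℝ} (h : TwoOrderAchievable K V R1 R2) (a b : Fin K) (ha : (a : ℕ) < K - 1)
    (hb : (b : ℕ) ≠ K - 2) :
    R1 + R2 ≤
      ∑ S ∈ univ.filter (fun S : {S : Finset (Fin K) // S.Nonempty} => a ∈ S.1 ∨ b ∈ S.1),
        Real.logb 2 (Fintype.card (V S)) := by
  refine le_of_forall_le_add_sub_logb fun ε hε hε1 => ?_
  obtain ⟨n, M1, M2, hn, hM1, hM2, hR1, hR2, enc, dec, herr⟩ := h ε hε
  let correct (m : Fin M1 × Fin M2) : Prop :=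
    (∀ i : Fin K, (i : ℕ) < K - 1 → (dec i fun t T => enc m.1 m.2 t T.1).1 = m.1) ∧
      (∀ i : Fin K, (i : ℕ) ≠ K - 2 → (dec i fun t T => enc m.1 m.2 t T.1).2 = m.2)
  have herr : (#(univ.filter fun m => ¬ correct m) : ℝ) ≤ ε * (M1 * M2) := herr
  have hgood : (1 - ε) * (M1 * M2) ≤ #(univ.filter correct) := by
    have hsplit : (#(univ.filter correct) : ℝ) + #(univ.filter fun m => ¬ correct m) =
        M1 * M2 := by
      exact_mod_cast (card_filter_add_card_filter_not correct).trans (by simp)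
    linarith
  refine add_le_add_sub_logb_of_code hn hM1 hM2 hε.le hε1 hR1 hR2 hgood
    (logb_card_le_of_decode _ _ (fun m => enc m.1 m.2)
      (fun y => ((dec a fun t T => y t ⟨T.1, Or.inl T.2⟩).1,
        (dec b fun t T => y t ⟨T.1, Or.inr T.2⟩).2)) fun m hm => ?_)
  rw [mem_filter] at hm
  exact Prod.ext (hm.2.1 a ha) (hm.2.2 b hb)

/-- Converse for the combination network with messages
`M_{\bar K}` (rate `R1`) and `M_{\bar{K-1}}` (rate `R2`): for every private
receiver `j` (0-indexed `(j:ℕ) < K-2`),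
`2 R2 + 2 R1 ≤ C_{↓_{W_j}{\bar{K-1},\bar K}} + C_{W_K} + C_{W_{K-1}}`,
where `C_S = log₂ |V S|`.  In addition the key combinatorial facts hold:
`W_K ∩ W_{K-1} ∩ W_j = ↑_{W_j}{K-1.K}` and
`C_{W_j} = C_{↓_{W_j}{\bar{K-1},\bar K}} + C_{↑_{W_j}{K-1.K}}`
(receivers `K-1`, `K` are the 0-indexed `⟨K-2,_⟩`, `⟨K-1,_⟩`). -/
theorem stmt_12 (K : ℕ) (hK : 3 ≤ K)
    (V : {S : Finset (Fin K) // S.Nonempty} → Type)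
    [∀ S, Fintype (V S)] [∀ S, Nonempty (V S)]
    (R1 R2 : ℝ) (hach : TwoOrderAchievable K V R1 R2) :
    (∀ j : Fin K, (j : ℕ) < K - 2 →
      2 * R2 + 2 * R1 ≤
        (∑ S ∈ univ.filter (fun S : {S : Finset (Fin K) // S.Nonempty} =>
            j ∈ S.1 ∧ ((⟨K - 2, by omega⟩ : Fin K) ∉ S.1 ∨ (⟨K - 1, by omega⟩ : Fin K) ∉ S.1)),
          Real.logb 2 (Fintype.card (V S))) +
        (∑ S ∈ univ.filter (fun S : {S : Finset (Fin K) // S.Nonempty} =>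
            (⟨K - 1, by omega⟩ : Fin K) ∈ S.1),
          Real.logb 2 (Fintype.card (V S))) +
        ∑ S ∈ univ.filter (fun S : {S : Finset (Fin K) // S.Nonempty} =>
            (⟨K - 2, by omega⟩ : Fin K) ∈ S.1),
          Real.logb 2 (Fintype.card (V S))) ∧
    (∀ j : Fin K, (j : ℕ) < K - 2 →
      ({S : {S : Finset (Fin K) // S.Nonempty} | (⟨K - 1, by omega⟩ : Fin K) ∈ S.1} ∩
          {S : {S : Finset (Fin K) // S.Nonempty} | (⟨K - 2, by omega⟩ : Fin K) ∈ S.1} ∩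
          {S : {S : Finset (Fin K) // S.Nonempty} | j ∈ S.1} =
        {S : {S : Finset (Fin K) // S.Nonempty} |
          j ∈ S.1 ∧ (⟨K - 2, by omega⟩ : Fin K) ∈ S.1 ∧ (⟨K - 1, by omega⟩ : Fin K) ∈ S.1}) ∧
      (∑ S ∈ univ.filter (fun S : {S : Finset (Fin K) // S.Nonempty} => j ∈ S.1),
          Real.logb 2 (Fintype.card (V S))) =
        (∑ S ∈ univ.filter (fun S : {S : Finset (Fin K) // S.Nonempty} =>
            j ∈ S.1 ∧ ((⟨K - 2, by omega⟩ : Fin K) ∉ S.1 ∨ (⟨K - 1, by omega⟩ : Fin K) ∉ S.1)),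
          Real.logb 2 (Fintype.card (V S))) +
        ∑ S ∈ univ.filter (fun S : {S : Finset (Fin K) // S.Nonempty} =>
            j ∈ S.1 ∧ (⟨K - 2, by omega⟩ : Fin K) ∈ S.1 ∧ (⟨K - 1, by omega⟩ : Fin K) ∈ S.1),
          Real.logb 2 (Fintype.card (V S))) := by
  refine ⟨fun j hj => ?_, fun j _ =>
    ⟨?_, (sum_filter_and_not_or_add_sum_filter_and_and _ _ _ _).symm⟩⟩
  · have hcut_j := hach.add_le_sum_logb_card j j (by omega) (by omega)
    have hcut_pair := hach.add_le_sum_logb_card ⟨K - 2, by omega⟩ ⟨K - 1, by omega⟩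
      (by simp only; omega) (by simp only; omega)
    simp only [or_self] at hcut_j
    have hsplit := sum_filter_add_sum_filter_or_le
      (fun S : {S : Finset (Fin K) // S.Nonempty} => j ∈ S.1)
      (fun S => (⟨K - 2, by omega⟩ : Fin K) ∈ S.1) (fun S => (⟨K - 1, by omega⟩ : Fin K) ∈ S.1)
      (f := fun S => Real.logb 2 (Fintype.card (V S)))
      (fun S => Real.logb_nonneg one_lt_two (by exact_mod_cast Fintype.card_pos (α := V S)))
    linarith
  · ext S
    simp only [Set.mem_inter_iff, Set.mem_ofPred_eq]
    tauto
end
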